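/- Let δ_L > 0, 0 < δ_R < 1, and τ_L ≥ δ_L + 1. Then any τ_R < -δ_R - 1 with ψ̂(τ_L, δ_L, τ_R, δ_R) = 0 satisfies τ_R > -1/τ_L - δ_R - 1. (Equivalently, the curve ψ̂ = 0 lies strictly above the curve τ_R = -1/τ_L - δ_R - 1.) -/
import Mathlib


noncomputable section

/-- The unstable eigenvalue `λ_R^u` of `A_R`. -/
def lamRu (ξ : ℝ × ℝ × ℝ × ℝ) : ℝ := (ξ.2.2.1 - Real.sqrt (ξ.2.2.1 ^ 2 - 4 * ξ.2.2.2)) / 2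

/-- The stable eigenvalue `λ_R^s` of `A_R`. -/
def lamRs (ξ : ℝ × ℝ × ℝ × ℝ) : ℝ := (ξ.2.2.1 + Real.sqrt (ξ.2.2.1 ^ 2 - 4 * ξ.2.2.2)) / 2

/-- The function `ψ̂(ξ) = -δ_L((λ_R^u)² - 1) + λ_R^u((λ_R^u)² - 1)τ_L + (1 - δ_R)(λ_R^u)²`. -/
def psiHat (ξ : ℝ × ℝ × ℝ × ℝ) : ℝ :=
  -ξ.2.1 * ((lamRu ξ) ^ 2 - 1) + lamRu ξ * ((lamRu ξ) ^ 2 - 1) * ξ.1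
    + (1 - ξ.2.2.2) * (lamRu ξ) ^ 2

/-- Lemma 5.6: for `δ_L > 0`, `0 < δ_R < 1`, `τ_L ≥ δ_L + 1`, any `τ_R < -δ_R - 1`
with `ψ̂(τ_L, δ_L, τ_R, δ_R) = 0` satisfies `τ_R > -1/τ_L - δ_R - 1`. -/
theorem psiHat_zero_above_curve (dL dR tL tR : ℝ) (h0 : 0 < dL) (h1 : 0 < dR)
    (h2 : dR < 1) (h3 : dL + 1 ≤ tL) (h4 : tR < -dR - 1)
    (h5 : psiHat (tL, dL, tR, dR) = 0) :
    -1 / tL - dR - 1 < tR := by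
  have hdisc : (0:ℝ) ≤ tR ^ 2 - 4 * dR := by nlinarith
  have hs : Real.sqrt (tR ^ 2 - 4 * dR) ^ 2 = tR ^ 2 - 4 * dR := Real.sq_sqrt hdisc
  set l : ℝ := lamRu (tL, dL, tR, dR) with hl
  have hldef : l = (tR - Real.sqrt (tR ^ 2 - 4 * dR)) / 2 := rfl
  have hchar : l ^ 2 - tR * l + dR = 0 := by
    rw [hldef]; linear_combination hs / 4
  have hsgt : tR + 2 < Real.sqrt (tR ^ 2 - 4 * dR) := by
    rcases lt_or_ge (tR + 2) 0 with h | h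
    · exact lt_of_lt_of_le h (Real.sqrt_nonneg _)
    · rw [show tR + 2 = Real.sqrt ((tR + 2) ^ 2) from (Real.sqrt_sq h).symm]
      apply Real.sqrt_lt_sqrt (by positivity)
      nlinarith
  have hlneg : l < -1 := by rw [hldef]; linarith
  have htL : (0:ℝ) < tL := by linarith
  have h5' : -dL * (l ^ 2 - 1) + l * (l ^ 2 - 1) * tL + (1 - dR) * l ^ 2 = 0 := by
    simpa [psiHat, hl] using h5
  have hE : l * (l ^ 2 - 1) * tL = dL * (l ^ 2 - 1) - (1 - dR) * l ^ 2 := by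
    linear_combination h5'
  have hcharl : tR * l = l ^ 2 + dR := by linear_combination -hchar
  have hmain : (tL * (tR + dR + 1) + 1) * (l ^ 2 * (l ^ 2 - 1)) =
      (l + 1) * (l + dR) * (dL * (l ^ 2 - 1) - (1 - dR) * l ^ 2) + l ^ 2 * (l ^ 2 - 1) := by
    linear_combination (tL * l * (l ^ 2 - 1)) * hcharl +
      (l ^ 2 + dR + (dR + 1) * l) * hE
  have hl2 : 1 < l ^ 2 := by
    nlinarith [mul_pos (show (0:ℝ) < -(l+1) by linarith) (show (0:ℝ) < -(l-1) by linarith)]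
  have hp1 : 0 < ((-(l+1)) * (-(l+dR))) * (dL * (l ^ 2 - 1)) :=
    mul_pos (mul_pos (by linarith) (by linarith)) (mul_pos h0 (by linarith))
  have hp2 : 0 < (l ^ 2 * (-(l+1))) * (dR * (1 - l - dR) + 1) :=
    mul_pos (mul_pos (by linarith) (by linarith)) (by nlinarith)
  have hkey : 0 < (l + 1) * (l + dR) * (dL * (l ^ 2 - 1) - (1 - dR) * l ^ 2)
      + l ^ 2 * (l ^ 2 - 1) := by nlinarith [hp1, hp2]
  have hP : (0:ℝ) < l ^ 2 * (l ^ 2 - 1) := mul_pos (by linarith) (by linarith)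
  have hXP : 0 < (tL * (tR + dR + 1) + 1) * (l ^ 2 * (l ^ 2 - 1)) := by
    rw [hmain]; exact hkey
  have hX : 0 < tL * (tR + dR + 1) + 1 := by
    rcases mul_pos_iff.mp hXP with ⟨h, _⟩ | ⟨_, h'⟩
    · exact h
    · linarith
  have hfin : -1 / tL < tR + dR + 1 := by
    rw [div_lt_iff₀ htL]
    nlinarith [hX]
  linarith

end
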